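/- arXiv:2210.11197 — 6 statements merged into one kernel-verified Lean document; each statement's English description precedes it below -/
import Mathlib

section
/- Let A, B and C be real matrices of the same finite dimensions such that A = B ∘ C, where ∘ denotes the Hadamard (entrywise) product. Then ‖A‖ ≤ max over all pairs (i, j) with A(i,j) ≠ 0 of r_i(B)·c_j(C), where r_i(B) is the ℓ2-norm of the i-th row of B, c_j(C) is the ℓ2-norm of the j-th column of C, and ‖·‖ denotes the spectral norm (the operator norm induced by the Euclidean norm). -/
open scoped Matrix.Norms.L2Operator

/-- The `ℓ₂`-norm of the `i`-th row of a real matrix `B`. -/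
noncomputable def rowNorm {m n : Type*} [Fintype n] (B : Matrix m n ℝ) (i : m) : ℝ :=
  Real.sqrt (∑ j, B i j ^ 2)

/-- The `ℓ₂`-norm of the `j`-th column of a real matrix `C`. -/
noncomputable def colNorm {m n : Type*} [Fintype m] (C : Matrix m n ℝ) (j : n) : ℝ :=
  Real.sqrt (∑ i, C i j ^ 2)

/-- **Hadamard-product norm bound.** If `A = B ∘ C` is a Hadamard (entrywise) product of real
matrices, then the spectral norm of `A` is at most the maximum, over all pairs `(i, j)` with
`A i j ≠ 0`, of `r_i(B) · c_j(C)`, where `r_i(B)` is the `ℓ₂`-norm of the `i`-th row of `B` and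
`c_j(C)` is the `ℓ₂`-norm of the `j`-th column of `C`.  (The maximum is expressed via an
arbitrary upper bound `K` of the quantities `r_i(B) · c_j(C)` over the nonzero entries of `A`;
the set of such pairs is nonempty.) -/
theorem l2_opNorm_hadamard_le
    {m n : Type*} [Fintype m] [Fintype n] [DecidableEq n]
    (A B C : Matrix m n ℝ) (hA : A = Matrix.hadamard B C)
    (hne : ∃ i j, A i j ≠ 0)
    (K : ℝ) (hK : ∀ i j, A i j ≠ 0 → rowNorm B i * colNorm C j ≤ K) :
    ‖A‖ ≤ K := by
  classical
  obtain ⟨i₀, j₀, h₀⟩ := hne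
  have hKnn : 0 ≤ K :=
    le_trans (mul_nonneg (Real.sqrt_nonneg _) (Real.sqrt_nonneg _)) (hK i₀ j₀ h₀)
  rw [Matrix.l2_opNorm_def]
  refine ContinuousLinearMap.opNorm_le_bound _ hKnn fun x => ?_
  -- key entrywise facts
  have hrow_nn : ∀ i, 0 ≤ rowNorm B i := fun i => Real.sqrt_nonneg _
  have hcol_nn : ∀ j, 0 ≤ colNorm C j := fun j => Real.sqrt_nonneg _
  set y : n → ℝ := (WithLp.equiv 2 (n → ℝ)) x with hy
  -- bound each coordinate of A *ᵥ y using Cauchy–Schwarz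
  have key : ∀ i, (∑ j, A i j * y j) ^ 2 ≤
      rowNorm B i ^ 2 * ∑ j, (if A i j ≠ 0 then C i j ^ 2 * y j ^ 2 else 0) := by
    intro i
    have h1 : (∑ j, A i j * y j) =
        ∑ j, (if A i j ≠ 0 then B i j else 0) * (if A i j ≠ 0 then C i j * y j else 0) := by
      refine Finset.sum_congr rfl fun j _ => ?_
      by_cases h : A i j = 0
      · simp [h]
      · have hBC : A i j = B i j * C i j := by rw [hA]; rfl
        simp only [h, ne_eq, not_false_eq_true, if_true]
        rw [hBC, mul_assoc]
    rw [h1]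
    calc (∑ j, (if A i j ≠ 0 then B i j else 0) * (if A i j ≠ 0 then C i j * y j else 0)) ^ 2
        ≤ (∑ j, (if A i j ≠ 0 then B i j else 0) ^ 2) *
            ∑ j, (if A i j ≠ 0 then C i j * y j else 0) ^ 2 :=
          Finset.sum_mul_sq_le_sq_mul_sq _ _ _
      _ ≤ rowNorm B i ^ 2 * ∑ j, (if A i j ≠ 0 then C i j ^ 2 * y j ^ 2 else 0) := by
          refine mul_le_mul ?_ (le_of_eq ?_) (Finset.sum_nonneg fun j _ => sq_nonneg _) (sq_nonneg _)
          · rw [rowNorm, Real.sq_sqrt (Finset.sum_nonneg fun j _ => sq_nonneg _)]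
            refine Finset.sum_le_sum fun j _ => ?_
            by_cases h : A i j = 0 <;> simp [h, sq_nonneg]
          · refine Finset.sum_congr rfl fun j _ => ?_
            by_cases h : A i j = 0 <;> simp [h, mul_pow]
  -- for each column j, the weighted column sum is at most K^2
  have colkey : ∀ j, (∑ i, (if A i j ≠ 0 then rowNorm B i ^ 2 * C i j ^ 2 else 0)) ≤ K ^ 2 := by
    intro j
    by_cases hc : colNorm C j = 0
    · have hz : ∀ i, C i j = 0 := by
        intro i
        have := Real.sqrt_eq_zero (Finset.sum_nonneg fun i _ => sq_nonneg _) |>.mp hc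
        have hi := (Finset.sum_eq_zero_iff_of_nonneg (fun i _ => sq_nonneg (C i j))).mp this i
          (Finset.mem_univ i)
        exact pow_eq_zero_iff (by norm_num) |>.mp hi
      have : (∑ i, (if A i j ≠ 0 then rowNorm B i ^ 2 * C i j ^ 2 else 0)) = 0 := by
        refine Finset.sum_eq_zero fun i _ => ?_
        by_cases h : A i j = 0 <;> simp [h, hz i]
      rw [this]; positivity
    · have hcpos : 0 < colNorm C j := lt_of_le_of_ne (hcol_nn j) (Ne.symm hc)
      have step : ∀ i, (if A i j ≠ 0 then rowNorm B i ^ 2 * C i j ^ 2 else 0) ≤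
          K ^ 2 / colNorm C j ^ 2 * C i j ^ 2 := by
        intro i
        by_cases h : A i j = 0
        · simp only [h, ne_eq, not_true_eq_false, if_false]
          positivity
        · simp only [h, ne_eq, not_false_eq_true, if_true]
          have hle : rowNorm B i * colNorm C j ≤ K := hK i j h
          have h2 : (rowNorm B i * colNorm C j) ^ 2 ≤ K ^ 2 :=
            pow_le_pow_left₀ (mul_nonneg (hrow_nn i) (hcol_nn j)) hle 2
          rw [mul_pow] at h2
          have : rowNorm B i ^ 2 ≤ K ^ 2 / colNorm C j ^ 2 :=
            (le_div_iff₀ (by positivity)).mpr h2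
          exact mul_le_mul_of_nonneg_right this (sq_nonneg _)
      calc (∑ i, (if A i j ≠ 0 then rowNorm B i ^ 2 * C i j ^ 2 else 0))
          ≤ ∑ i, K ^ 2 / colNorm C j ^ 2 * C i j ^ 2 := Finset.sum_le_sum fun i _ => step i
        _ = K ^ 2 / colNorm C j ^ 2 * ∑ i, C i j ^ 2 := by rw [Finset.mul_sum]
        _ = K ^ 2 := by
            rw [colNorm] at hcpos ⊢
            rw [Real.sq_sqrt (Finset.sum_nonneg fun i _ => sq_nonneg _)]
            have hS : 0 < ∑ i : m, C i j ^ 2 := Real.sqrt_pos.mp hcpos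
            field_simp
  -- assemble
  have hnorm : ‖(Matrix.toEuclideanLin.trans LinearMap.toContinuousLinearMap) A x‖ ^ 2 ≤
      K ^ 2 * ‖x‖ ^ 2 := by
    have hfx : ‖(Matrix.toEuclideanLin.trans LinearMap.toContinuousLinearMap) A x‖ ^ 2 =
        ∑ i, (∑ j, A i j * y j) ^ 2 := by
      rw [EuclideanSpace.norm_eq, Real.sq_sqrt (Finset.sum_nonneg fun i _ => sq_nonneg _)]
      refine Finset.sum_congr rfl fun i _ => ?_
      rw [Real.norm_eq_abs, sq_abs]
      rfl
    have hxn : ‖x‖ ^ 2 = ∑ j, y j ^ 2 := by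
      rw [EuclideanSpace.norm_eq, Real.sq_sqrt (Finset.sum_nonneg fun i _ => sq_nonneg _)]
      refine Finset.sum_congr rfl fun j _ => ?_
      rw [Real.norm_eq_abs, sq_abs]
      rfl
    rw [hfx, hxn]
    calc (∑ i, (∑ j, A i j * y j) ^ 2)
        ≤ ∑ i, rowNorm B i ^ 2 * ∑ j, (if A i j ≠ 0 then C i j ^ 2 * y j ^ 2 else 0) :=
          Finset.sum_le_sum fun i _ => key i
      _ = ∑ j, (∑ i, (if A i j ≠ 0 then rowNorm B i ^ 2 * C i j ^ 2 else 0)) * y j ^ 2 := by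
          simp_rw [Finset.mul_sum]
          rw [Finset.sum_comm]
          simp_rw [Finset.sum_mul]
          refine Finset.sum_congr rfl fun j _ => Finset.sum_congr rfl fun i _ => ?_
          by_cases h : A i j = 0 <;> simp [h] <;> ring
      _ ≤ ∑ j, K ^ 2 * y j ^ 2 :=
          Finset.sum_le_sum fun j _ => mul_le_mul_of_nonneg_right (colkey j) (sq_nonneg _)
      _ = K ^ 2 * ∑ j, y j ^ 2 := by rw [Finset.mul_sum]
  have h1 : 0 ≤ K * ‖x‖ := mul_nonneg hKnn (norm_nonneg _)
  have h2 : ‖(Matrix.toEuclideanLin.trans LinearMap.toContinuousLinearMap) A x‖ ^ 2 ≤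
      (K * ‖x‖) ^ 2 := by nlinarith [hnorm]
  exact (pow_le_pow_iff_left₀ (norm_nonneg _) h1 two_ne_zero).mp h2
end

section
/- Let n = 2^d for an integer d ≥ 1, let k ≥ 1 be an integer, and let w_1, …, w_k be functions from {0, …, n−1} to {0, …, n−1} such that each w_j is either a bijection (a permutation of {0, …, n−1}) or the constant-zero function (a 'proper band'). For each i ∈ {0, …, n−1} let r_i = (w_1(i), …, w_k(i)) ∈ {0, …, n−1}^k, and compare the tuples r_0, …, r_{n−1} in lexicographic order. Let π be the stable sorting permutation of the list r_0, …, r_{n−1}. Then: if every band w_j is the constant-zero function, π is an even permutation; otherwise, π has the same sign (even/odd) as the first band w_{j*} that is a bijection, where j* = min{ j : w_j is a bijection }. -/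
/-- The lexicographic linear order on strings indexed by `Fin k`
(the canonical Mathlib instance, made available for typeclass search). -/
noncomputable instance instLexLinearOrderFin (k : ℕ) (α : Type*) [LinearOrder α] :
    LinearOrder (Lex (Fin k → α)) :=
  @Pi.Lex.linearOrder (Fin k) (fun _ => α) inferInstance
    IsWellOrder.toIsWellFounded (fun _ => inferInstance)

/-- `π` is the stable sorting permutation of the list `s 0, …, s (n-1)`: for every pair of
consecutive positions `i, i+1`, either `s (π i) < s (π (i+1))`, or `s (π i) = s (π (i+1))` and
`π i < π (i+1)` as indices. -/
def IsStableSortPerm {n : ℕ} {α : Type*} [LinearOrder α]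
    (s : Fin n → α) (π : Equiv.Perm (Fin n)) : Prop :=
  ∀ (i : ℕ) (h : i + 1 < n),
    s (π ⟨i, Nat.lt_of_succ_lt h⟩) < s (π ⟨i + 1, h⟩) ∨
      (s (π ⟨i, Nat.lt_of_succ_lt h⟩) = s (π ⟨i + 1, h⟩) ∧
        ((π ⟨i, Nat.lt_of_succ_lt h⟩ : ℕ) < (π ⟨i + 1, h⟩ : ℕ)))

lemma strictMono_fin_eq_id {n : ℕ} {f : Fin n → Fin n} (hf : StrictMono f) : f = id := by
  haveI : WellFoundedLT (Fin n) := Finite.to_wellFoundedLT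
  have hsurj : Function.Surjective f := Finite.injective_iff_surjective.mp hf.injective
  have h1 : Set.range f = Set.range (id : Fin n → Fin n) := by
    rw [Set.range_id]
    exact Set.range_eq_univ.mpr hsurj
  exact (hf.range_inj (strictMono_id (α := Fin n))).1 h1

lemma strictMono_of_consec {m : ℕ} {f : Fin (m + 1) → Fin (m + 1)}
    (h : ∀ (i : ℕ) (hi : i + 1 < m + 1), f ⟨i, Nat.lt_of_succ_lt hi⟩ < f ⟨i + 1, hi⟩) :
    StrictMono f := by
  rw [Fin.strictMono_iff_lt_succ]
  intro i
  have := h i.val (Nat.succ_lt_succ i.isLt)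
  exact this


/-- **The sign of the sorting permutation of proper bands.** Let `n = 2^d` (`d ≥ 1`), `k ≥ 1`,
and let `w 0, …, w (k-1) : Fin n → Fin n` be bands, each either a bijection or the constant-zero
function (a *proper* band). For `i ∈ {0, …, n-1}` let `r i = (w 0 i, …, w (k-1) i)` be the rows,
compared lexicographically, and let `π` be the stable sorting permutation of `r 0, …, r (n-1)`.
Then: if every band is constant zero, `π` is even; otherwise `π` has the same sign as the first
band that is a bijection. -/
theorem sign_stableSortPerm_properBands
    {d : ℕ} (hd : 1 ≤ d) (n : ℕ) (hn : n = 2 ^ d) (k : ℕ) (hk : 1 ≤ k)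
    (w : Fin k → Fin n → Fin n)
    (hproper : ∀ j, Function.Bijective (w j) ∨ ∀ i, ((w j i : Fin n) : ℕ) = 0)
    (r : Fin n → Lex (Fin k → Fin n)) (hr : ∀ i, r i = toLex fun j => w j i)
    (π : Equiv.Perm (Fin n)) (hπ : IsStableSortPerm r π) :
    ((∀ j i, ((w j i : Fin n) : ℕ) = 0) → Equiv.Perm.sign π = 1) ∧
      (∀ (j' : Fin k) (hbij : Function.Bijective (w j')),
        (∀ j, j < j' → ¬ Function.Bijective (w j)) →
        Equiv.Perm.sign π = Equiv.Perm.sign (Equiv.ofBijective (w j') hbij)) := by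
  have hpos : 0 < n := hn ▸ pow_pos (by norm_num) d
  obtain ⟨m, rfl⟩ : ∃ m, n = m + 1 := ⟨n - 1, (Nat.succ_pred_eq_of_pos hpos).symm⟩
  constructor
  · -- all zero case
    intro hz
    have hconst : ∀ a b : Fin (m + 1), r a = r b := by
      intro a b
      rw [hr, hr]
      congr 1
      funext j
      exact Fin.ext (by rw [hz j a, hz j b])
    have hmono : StrictMono (fun i => π i : Fin (m+1) → Fin (m+1)) := by
      apply strictMono_of_consec
      intro i hi
      rcases hπ i hi with h | ⟨_, h⟩
      · exact absurd (hconst _ _) h.ne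
      · exact h
    have : π = 1 := Equiv.ext fun i => congrFun (strictMono_fin_eq_id hmono) i
    rw [this, map_one]
  · intro j' hbij hfirst
    have hz : ∀ j, j < j' → ∀ i, ((w j i : Fin (m+1)) : ℕ) = 0 := fun j hj =>
      (hproper j).resolve_left (hfirst j hj)
    have hmono : StrictMono (fun i => w j' (π i)) := by
      apply strictMono_of_consec
      intro i hi
      set a := π ⟨i, Nat.lt_of_succ_lt hi⟩ with ha
      set b := π ⟨i + 1, hi⟩ with hb
      have hab : a ≠ b := by
        intro h
        have := π.injective h
        simp at this
      have hlt : r a < r b := by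
        rcases hπ i hi with h | ⟨heq, _⟩
        · exact h
        · exfalso
          apply hab
          apply hbij.injective
          rw [hr a, hr b] at heq
          exact congrFun (toLex_inj.mp heq) j'
      rw [hr, hr] at hlt
      obtain ⟨j0, hj0, hlt0⟩ := hlt
      rcases lt_trichotomy j0 j' with h | rfl | h
      · exact absurd (Fin.ext ((hz j0 h a).trans (hz j0 h b).symm) : w j0 a = w j0 b) hlt0.ne
      · exact hlt0
      · exact absurd (hbij.injective (hj0 j' h)) hab
    have hid : (fun i => w j' (π i)) = id := strictMono_fin_eq_id hmono
    have hπeq : π = (Equiv.ofBijective (w j') hbij)⁻¹ := by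
      apply Equiv.ext
      intro i
      have : Equiv.ofBijective (w j') hbij (π i) = i := congrFun hid i
      show π i = (Equiv.ofBijective (w j') hbij).symm i
      exact (Equiv.eq_symm_apply _).mpr this
    rw [hπeq, map_inv]
    simp
end

section
/- Let m ≥ 2 be an integer. Let I = {0, 1, ⊥}^m, and define the I × I matrix A by A(σ, τ) = 1 if σ = ⊥^m (the all-⊥ string) and τ = ⊥^m_{i↦1} (the string with ⊥ at all positions except position i, where it is 1) for some i ∈ {1, …, m}, and A(σ, τ) = 0 otherwise. Let FST_m : I → {0,1} return the first symbol of its input that is not ⊥, and 0 if all symbols are ⊥. Then: (i) A(σ, τ) = 0 whenever FST_m(σ) = FST_m(τ); (ii) the spectral norm satisfies ‖A‖ ≥ √(m−1); (iii) for every i ∈ {1, …, m}, ‖A ∘ D_i‖ ≤ 1, where D_i is the I × I zero-one matrix with D_i(σ, τ) = 1 iff σ_i ≠ τ_i. Consequently A is a nonzero nonnegative matrix vanishing on pairs with equal FST_m-value and satisfying ‖A‖ ≥ √(m−1) · max_i ‖A ∘ D_i‖. -/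
open scoped Matrix.Norms.L2Operator
open Classical

/-- **Adversary witness for `FST_m`** (`ADV(FST_m) = Ω(√m)`). Let `m ≥ 2` and let
`I = {0, 1, ⊥}^m` (encoded as `Fin m → Option Bool`, `⊥ = none`, `0 = some false`,
`1 = some true`). Let `A` be the `I × I` matrix with `A σ τ = 1` iff `σ = ⊥^m` and
`τ = ⊥^m_{i ↦ 1}` for some `i`, and `A σ τ = 0` otherwise; let `D i` be the zero-one matrix
with `D i σ τ = 1` iff `σ` and `τ` differ in position `i`; and let `FST σ` be the first
symbol of `σ` that is not `⊥` (and `0`, i.e. `false`, if all symbols are `⊥`). Then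
(i) `A σ τ = 0` whenever `FST σ = FST τ`; (ii) `‖A‖ ≥ √(m-1)`;
(iii) `‖A ∘ D i‖ ≤ 1` for every `i`; and consequently `A` is a nonzero nonnegative matrix
vanishing on pairs with equal `FST`-value with `‖A‖ ≥ √(m-1) · ‖A ∘ D i‖` for every `i`. -/
theorem adversary_witness_fst
    {m : ℕ} (hm : 2 ≤ m)
    (A : Matrix (Fin m → Option Bool) (Fin m → Option Bool) ℝ)
    (hA : ∀ σ τ, A σ τ =
      if σ = (fun _ => none) ∧
          ∃ i : Fin m, τ = Function.update (fun _ => (none : Option Bool)) i (some true)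
        then 1 else 0)
    (D : Fin m → Matrix (Fin m → Option Bool) (Fin m → Option Bool) ℝ)
    (hD : ∀ i σ τ, D i σ τ = if σ i ≠ τ i then 1 else 0)
    (FST : (Fin m → Option Bool) → Bool)
    (hFST : ∀ σ, FST σ = ((List.finRange m).findSome? σ).getD false) :
    (∀ σ τ, FST σ = FST τ → A σ τ = 0) ∧
      Real.sqrt ((m : ℝ) - 1) ≤ ‖A‖ ∧
      (∀ i, ‖Matrix.hadamard A (D i)‖ ≤ 1) ∧
      A ≠ 0 ∧ (∀ σ τ, 0 ≤ A σ τ) ∧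
      (∀ i, Real.sqrt ((m : ℝ) - 1) * ‖Matrix.hadamard A (D i)‖ ≤ ‖A‖) := by
  have hm0 : 0 < m := by omega
  set σ₀ : Fin m → Option Bool := fun _ => none with hσ₀
  set f : Fin m → (Fin m → Option Bool) :=
    fun i => Function.update σ₀ i (some true) with hf
  have hfi : ∀ i, f i i = some true := by intro i; simp [f]
  have hfij : ∀ i j, j ≠ i → f i j = none := by
    intro i j hji; simp [f, Function.update_apply, hji, σ₀]
  have hfinj : Function.Injective f := by
    intro i j h
    by_contra hij
    have h1 := congrFun h i
    rw [hfi i, hfij j i (fun hh => hij hh)] at h1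
    cases h1
  -- (i)
  have part1 : ∀ σ τ, FST σ = FST τ → A σ τ = 0 := by
    intro σ τ hst
    rw [hA]
    rw [if_neg]
    rintro ⟨hσ, i, hτ⟩
    have hFSTσ : FST σ = false := by
      rw [hFST, hσ]
      have : (List.finRange m).findSome? (fun _ => (none : Option Bool)) = none := by
        rw [List.findSome?_eq_none_iff]; intro x _; rfl
      rw [this]; rfl
    have hFSTτ : FST τ = true := by
      rw [hFST]
      rcases h : (List.finRange m).findSome? τ with _ | b
      · rw [List.findSome?_eq_none_iff] at h
        have := h i (List.mem_finRange i)
        rw [hτ] at this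
        have := this
        simp [Function.update_self] at this
      · obtain ⟨a, ha, hab⟩ := List.exists_of_findSome?_eq_some h
        have hb : b = true := by
          by_cases hai : a = i
          · subst hai
            rw [hτ, Function.update_self] at hab
            exact (Option.some_inj.mp hab).symm
          · rw [hτ, Function.update_of_ne hai] at hab
            simp [σ₀] at hab
        simp [hb]
    rw [hFSTσ, hFSTτ] at hst
    exact Bool.noConfusion hst
  -- nonneg
  have part5 : ∀ σ τ, 0 ≤ A σ τ := by
    intro σ τ; rw [hA]; split <;> norm_num
  -- A ≠ 0
  have i0 : Fin m := ⟨0, hm0⟩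
  have part4 : A ≠ 0 := by
    intro h0
    have h1 := hA σ₀ (f i0)
    rw [h0] at h1
    simp only [Matrix.zero_apply] at h1
    have hc : True ∧ ∃ i : Fin m, f i0 = Function.update σ₀ i (some true) :=
      ⟨trivial, i0, rfl⟩
    rw [if_pos hc] at h1
    norm_num at h1
  -- Hadamard products are single-entry matrices
  have hM : ∀ i σ τ, Matrix.hadamard A (D i) σ τ =
      if σ = σ₀ ∧ τ = f i then 1 else 0 := by
    intro i σ τ
    rw [Matrix.hadamard_apply, hA, hD]
    by_cases h1 : σ = σ₀ ∧ τ = f i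
    · obtain ⟨h1a, h1b⟩ := h1
      subst h1a; subst h1b
      rw [if_pos ⟨rfl, ⟨i, rfl⟩⟩, if_pos, if_pos ⟨rfl, rfl⟩]
      · norm_num
      · rw [hfi]; exact fun h => by simp [σ₀] at h
    · rw [if_neg h1]
      by_cases h2 : σ = σ₀ ∧ ∃ j, τ = f j
      · obtain ⟨h2a, j, h2b⟩ := h2
        have hji : j ≠ i := by
          intro hji; exact h1 ⟨h2a, by rw [h2b, hji]⟩
        rw [if_pos ⟨h2a, ⟨j, h2b⟩⟩, if_neg]
        · norm_num
        · rw [h2a, h2b, hfij j i (Ne.symm hji)]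
          simp [σ₀]
      · rw [if_neg h2]; norm_num
  -- norm of the single-entry matrix is ≤ 1
  have part3 : ∀ i, ‖Matrix.hadamard A (D i)‖ ≤ 1 := by
    intro i
    have hcoord : ∀ (w : (Fin m → Option Bool) → ℝ) σ,
        Matrix.mulVec (Matrix.hadamard A (D i)) w σ = if σ = σ₀ then w (f i) else 0 := by
      intro w σ
      simp only [Matrix.mulVec, dotProduct]
      simp_rw [hM]
      by_cases hσ : σ = σ₀ <;>
        simp [hσ, ite_and, boole_mul, Finset.sum_ite_eq']
    rw [Matrix.l2_opNorm_def]
    refine ContinuousLinearMap.opNorm_le_bound _ zero_le_one (fun x => ?_)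
    rw [one_mul, LinearEquiv.trans_apply, LinearMap.coe_toContinuousLinearMap',
      Matrix.toEuclideanLin_apply, EuclideanSpace.norm_eq]
    simp_rw [hcoord]
    have h2 : (∑ σ, ‖if σ = σ₀ then x.ofLp (f i) else 0‖ ^ 2)
        = ‖x.ofLp (f i)‖ ^ 2 := by
      rw [Finset.sum_eq_single σ₀]
      · simp
      · intro b _ hb; simp [hb]
      · intro h; exact absurd (Finset.mem_univ σ₀) h
    rw [h2, Real.sqrt_sq_eq_abs, abs_norm]
    have h3 : ‖x.ofLp (f i)‖ = ‖x (f i)‖ := rfl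
    rw [h3, EuclideanSpace.norm_eq]
    have h4 : ‖x (f i)‖ = Real.sqrt (‖x (f i)‖ ^ 2) := by
      rw [Real.sqrt_sq_eq_abs, abs_norm]
    rw [h4]
    apply Real.sqrt_le_sqrt
    exact Finset.single_le_sum (f := fun τ => ‖x τ‖ ^ 2)
      (fun τ _ => sq_nonneg _) (Finset.mem_univ (f i))
  -- lower bound on ‖A‖
  have hsqrtm : Real.sqrt m ≤ ‖A‖ := by
    set S : Finset (Fin m → Option Bool) := Finset.image f Finset.univ with hS
    have hcard : S.card = m := by
      rw [hS, Finset.card_image_of_injective _ hfinj, Finset.card_univ, Fintype.card_fin]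
    have hmem2 : ∀ τ, (∃ j : Fin m, τ = Function.update σ₀ j (some true)) ↔ τ ∈ S := by
      intro τ
      rw [hS, Finset.mem_image]
      constructor
      · rintro ⟨j, hj⟩; exact ⟨j, Finset.mem_univ j, hj.symm⟩
      · rintro ⟨j, -, hj⟩; exact ⟨j, hj.symm⟩
    set v : (Fin m → Option Bool) → ℝ := fun τ => if τ ∈ S then 1 else 0 with hv
    have hsum : (∑ τ, v τ) = m := by
      rw [hv]
      rw [Finset.sum_ite_mem, Finset.univ_inter, Finset.sum_const, hcard,
        nsmul_eq_mul, mul_one]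
    have hAv : ∀ σ, Matrix.mulVec A v σ = if σ = σ₀ then (m : ℝ) else 0 := by
      intro σ
      simp only [Matrix.mulVec, dotProduct]
      by_cases hσ : σ = σ₀
      · rw [if_pos hσ, ← hsum]
        apply Finset.sum_congr rfl
        intro τ _
        rw [hA]
        by_cases hτ : τ ∈ S
        · rw [if_pos ⟨hσ, (hmem2 τ).mpr hτ⟩, one_mul]
        · rw [if_neg (fun h => hτ ((hmem2 τ).mp h.2)), zero_mul, hv]
          simp [hτ]
      · rw [if_neg hσ]
        apply Finset.sum_eq_zero
        intro τ _
        rw [hA, if_neg, zero_mul]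
        rintro ⟨h1, -⟩; exact hσ h1
    set x : EuclideanSpace ℝ (Fin m → Option Bool) :=
      (WithLp.equiv 2 ((Fin m → Option Bool) → ℝ)).symm v with hx
    have hxnorm : ‖x‖ = Real.sqrt m := by
      rw [EuclideanSpace.norm_eq]
      congr 1
      rw [← hsum]
      apply Finset.sum_congr rfl
      intro τ _
      have h1 : x τ = v τ := rfl
      rw [h1, hv]
      by_cases hτ : τ ∈ S <;> simp [hτ]
    have hAx : ‖(EuclideanSpace.equiv (Fin m → Option Bool) ℝ).symm
        (Matrix.mulVec A x)‖ = (m : ℝ) := by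
      rw [EuclideanSpace.norm_eq]
      have h1 : ∀ σ, ‖((EuclideanSpace.equiv (Fin m → Option Bool) ℝ).symm
          (Matrix.mulVec A x)) σ‖ ^ 2 = if σ = σ₀ then ((m:ℝ) ^ 2) else 0 := by
        intro σ
        have h2 : ((EuclideanSpace.equiv (Fin m → Option Bool) ℝ).symm
            (Matrix.mulVec A x)) σ = Matrix.mulVec A v σ := rfl
        rw [h2, hAv]
        by_cases hσ : σ = σ₀ <;> simp [hσ, Real.norm_eq_abs, sq_abs]
      rw [Finset.sum_congr rfl (fun σ _ => h1 σ),
        Finset.sum_ite_eq' Finset.univ σ₀ (fun _ => (m:ℝ) ^ 2),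
        if_pos (Finset.mem_univ σ₀), Real.sqrt_sq (Nat.cast_nonneg m)]
    have hineq : (m : ℝ) ≤ ‖A‖ * Real.sqrt m := by
      calc (m : ℝ) = ‖(EuclideanSpace.equiv (Fin m → Option Bool) ℝ).symm
            (Matrix.mulVec A x)‖ := hAx.symm
        _ ≤ ‖A‖ * ‖x‖ := Matrix.l2_opNorm_mulVec A x
        _ = ‖A‖ * Real.sqrt m := by rw [hxnorm]
    have hsq : Real.sqrt m * Real.sqrt m = (m : ℝ) :=
      Real.mul_self_sqrt (Nat.cast_nonneg m)
    have hpos : 0 < Real.sqrt m := by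
      apply Real.sqrt_pos.mpr
      exact_mod_cast hm0
    nlinarith [hineq, hsq, hpos, norm_nonneg A]
  have part2 : Real.sqrt ((m:ℝ) - 1) ≤ ‖A‖ := by
    refine le_trans ?_ hsqrtm
    apply Real.sqrt_le_sqrt
    linarith
  refine ⟨part1, part2, part3, part4, part5, fun i => ?_⟩
  calc Real.sqrt ((m:ℝ) - 1) * ‖Matrix.hadamard A (D i)‖
      ≤ Real.sqrt ((m:ℝ) - 1) * 1 :=
        mul_le_mul_of_nonneg_left (part3 i) (Real.sqrt_nonneg _)
    _ = Real.sqrt ((m:ℝ) - 1) := mul_one _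
    _ ≤ ‖A‖ := part2
end

section
/- Let n ≥ 2 be an integer. Let A be the matrix with rows and columns indexed by the permutations of {0, …, n−1}, defined by A(σ, τ) = 1 if σ is even, τ is odd, and σ = τ ∘ (s t) for some transposition (s t), and A(σ, τ) = 0 otherwise. Then the spectral norm of A satisfies ‖A‖ ≥ n(n−1)/2. -/
open scoped Matrix.Norms.L2Operator
open Classical

-- injectivity of swaps on ordered pairs
lemma swap_inj_of_lt {n : ℕ} {s t s' t' : Fin n} (h1 : s < t) (h2 : s' < t')
    (h : Equiv.swap s t = Equiv.swap s' t') : s = s' ∧ t = t' := by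
  have hs : Equiv.swap s' t' s = t := by rw [← h, Equiv.swap_apply_left]
  rcases eq_or_ne s s' with rfl | hss
  · refine ⟨rfl, ?_⟩
    rw [Equiv.swap_apply_left] at hs
    exact hs.symm
  · rcases eq_or_ne s t' with rfl | hst'
    · rw [Equiv.swap_apply_right] at hs
      exact absurd (h2.trans_le (hs ▸ h1.le)) (lt_irrefl _)
    · rw [Equiv.swap_apply_of_ne_of_ne hss hst'] at hs
      exact absurd hs h1.ne

-- the count of ordered pairs s < t in Fin n, as a real number
lemma card_lt_pairs (n : ℕ) (hn : 2 ≤ n) :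
    ((Finset.univ.filter (fun q : Fin n × Fin n => q.1 < q.2)).card : ℝ)
      = (n : ℝ) * ((n : ℝ) - 1) / 2 := by
  have h1 : (Finset.univ.filter (fun q : Fin n × Fin n => q.1 < q.2)).card
      = ∑ i ∈ Finset.range n, i := by
    rw [Finset.card_filter, Fintype.sum_prod_type, Finset.sum_comm,
      ← Fin.sum_univ_eq_sum_range (fun i => i) n]
    refine Finset.sum_congr rfl fun t _ => ?_
    have hfe : Finset.univ.filter (fun s : Fin n => s < t) = Finset.Iio t := by
      ext s; simp
    rw [show (∑ s : Fin n, if (s, t).1 < (s, t).2 then 1 else 0)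
        = ∑ _s ∈ Finset.univ.filter (fun s : Fin n => s < t), 1 from
        (Finset.sum_filter _ _).symm, hfe, ← Finset.card_eq_sum_ones, Fin.card_Iio]
  rw [h1]
  have h2 : (∑ i ∈ Finset.range n, i) * 2 = n * (n - 1) := Finset.sum_range_id_mul_two n
  have h2' := congrArg (Nat.cast : ℕ → ℝ) h2
  push_cast [Nat.cast_sub (by omega : 1 ≤ n)] at h2'
  push_cast
  linarith

/-- **Spectral norm lower bound for the `SG_n` adversary matrix.** Let `n ≥ 2` and let `A` be
the matrix indexed by permutations of `{0, …, n-1}` with `A σ τ = 1` iff `σ` is even, `τ` is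
odd, and `σ = τ ∘ (s t)` for some transposition `(s t)` (and `A σ τ = 0` otherwise). Then
`‖A‖ ≥ n(n-1)/2`. -/
theorem sg_adversary_matrix_norm_ge
    {n : ℕ} (hn : 2 ≤ n)
    (A : Matrix (Equiv.Perm (Fin n)) (Equiv.Perm (Fin n)) ℝ)
    (hA : ∀ σ τ, A σ τ =
      if Equiv.Perm.sign σ = 1 ∧ Equiv.Perm.sign τ = -1 ∧
          ∃ s t : Fin n, s ≠ t ∧ σ = τ * Equiv.swap s t
        then 1 else 0) :
    (n : ℝ) * ((n : ℝ) - 1) / 2 ≤ ‖A‖ := by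
  classical
  set c : ℝ := (n : ℝ) * ((n : ℝ) - 1) / 2 with hc
  have hc0 : 0 ≤ c := by
    have : (1:ℝ) ≤ (n:ℝ) := by exact_mod_cast Nat.one_le_of_lt hn
    have : (0:ℝ) ≤ (n:ℝ) * ((n:ℝ) - 1) := by nlinarith
    positivity
  let i0 : Fin n := ⟨0, by omega⟩
  let i1 : Fin n := ⟨1, by omega⟩
  have h01 : i0 ≠ i1 := by simp [i0, i1, Fin.ext_iff]
  set x : EuclideanSpace ℝ (Equiv.Perm (Fin n)) :=
    WithLp.toLp 2 (fun τ => if Equiv.Perm.sign τ = -1 then (1:ℝ) else 0) with hx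
  -- the action of A on x
  have hrow : ∀ σ : Equiv.Perm (Fin n),
      (A.mulVec x) σ = if Equiv.Perm.sign σ = 1 then c else 0 := by
    intro σ
    rcases eq_or_ne (Equiv.Perm.sign σ) 1 with hσ | hσ
    · rw [if_pos hσ]
      have hterm : ∀ τ, A σ τ * x τ =
          if ∃ s t : Fin n, s ≠ t ∧ τ = σ * Equiv.swap s t then 1 else 0 := by
        intro τ
        rw [hA]
        by_cases h : ∃ s t : Fin n, s ≠ t ∧ τ = σ * Equiv.swap s t
        · obtain ⟨s, t, hst, rfl⟩ := h
          have hτ : Equiv.Perm.sign (σ * Equiv.swap s t) = -1 := by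
            rw [Equiv.Perm.sign_mul, hσ, Equiv.Perm.sign_swap hst, one_mul]
          have hcond : Equiv.Perm.sign σ = 1 ∧
              Equiv.Perm.sign (σ * Equiv.swap s t) = -1 ∧
              ∃ s' t' : Fin n, s' ≠ t' ∧ σ = (σ * Equiv.swap s t) * Equiv.swap s' t' := by
            exact ⟨hσ, hτ, s, t, hst, by rw [mul_assoc, Equiv.swap_mul_self, mul_one]⟩
          rw [if_pos hcond, if_pos ⟨s, t, hst, rfl⟩]
          simp [hx, hτ]
        · rw [if_neg h]
          rw [if_neg, zero_mul]
          rintro ⟨-, -, s, t, hst, heq⟩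
          exact h ⟨s, t, hst, by rw [heq, mul_assoc, Equiv.swap_mul_self, mul_one]⟩
      have : (A.mulVec x) σ = ∑ τ, A σ τ * x τ := rfl
      rw [this]
      simp_rw [hterm]
      rw [Finset.sum_boole]
      -- count the set {τ | ∃ s t, s ≠ t ∧ τ = σ * swap s t}
      have himg : (Finset.univ.filter
            (fun τ => ∃ s t : Fin n, s ≠ t ∧ τ = σ * Equiv.swap s t))
          = (Finset.univ.filter (fun q : Fin n × Fin n => q.1 < q.2)).image
              (fun q => σ * Equiv.swap q.1 q.2) := by
        ext τ
        simp only [Finset.mem_filter, Finset.mem_image, Finset.mem_univ, true_and]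
        constructor
        · rintro ⟨s, t, hst, rfl⟩
          rcases hst.lt_or_gt with h | h
          · exact ⟨(s, t), h, rfl⟩
          · exact ⟨(t, s), h, by rw [Equiv.swap_comm]⟩
        · rintro ⟨⟨s, t⟩, h, rfl⟩
          exact ⟨s, t, h.ne, rfl⟩
      rw [himg, Finset.card_image_of_injOn, hc, ← card_lt_pairs n hn]
      intro ⟨s, t⟩ hs ⟨s', t'⟩ hs' h
      simp only [Finset.mem_coe, Finset.mem_filter, Finset.mem_univ, true_and] at hs hs'
      have : Equiv.swap s t = Equiv.swap s' t' := by
        have := mul_left_cancel h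
        exact this
      obtain ⟨h1, h2⟩ := swap_inj_of_lt hs hs' this
      simp [h1, h2]
    · rw [if_neg hσ]
      have : (A.mulVec x) σ = ∑ τ, A σ τ * x τ := rfl
      rw [this]
      apply Finset.sum_eq_zero
      intro τ _
      rw [hA, if_neg, zero_mul]
      rintro ⟨h1, -⟩
      exact hσ h1
  -- norms
  have hcard : (Finset.univ.filter
        (fun σ : Equiv.Perm (Fin n) => Equiv.Perm.sign σ = 1)).card
      = (Finset.univ.filter
        (fun τ : Equiv.Perm (Fin n) => Equiv.Perm.sign τ = -1)).card := by
    apply Finset.card_bij' (fun σ _ => σ * Equiv.swap i0 i1) (fun τ _ => τ * Equiv.swap i0 i1)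
    · intro σ hσ
      simp only [Finset.mem_filter, Finset.mem_univ, true_and] at hσ ⊢
      rw [Equiv.Perm.sign_mul, hσ, Equiv.Perm.sign_swap h01, one_mul]
    · intro τ hτ
      simp only [Finset.mem_filter, Finset.mem_univ, true_and] at hτ ⊢
      rw [Equiv.Perm.sign_mul, hτ, Equiv.Perm.sign_swap h01]
      norm_num
    · intro σ _; rw [mul_assoc, Equiv.swap_mul_self, mul_one]
    · intro τ _; rw [mul_assoc, Equiv.swap_mul_self, mul_one]
  set N : ℕ := (Finset.univ.filter
        (fun τ : Equiv.Perm (Fin n) => Equiv.Perm.sign τ = -1)).card with hN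
  have hNpos : 0 < N := by
    rw [hN, Finset.card_pos]
    exact ⟨Equiv.swap i0 i1, by simp [Equiv.Perm.sign_swap h01]⟩
  have hxnorm : ‖x‖ = Real.sqrt N := by
    rw [EuclideanSpace.norm_eq]
    congr 1
    have : ∀ τ : Equiv.Perm (Fin n), ‖x τ‖ ^ 2
        = if Equiv.Perm.sign τ = -1 then (1:ℝ) else 0 := by
      intro τ
      by_cases h : Equiv.Perm.sign τ = -1 <;> simp [hx, h]
    simp_rw [this]
    rw [Finset.sum_boole]
  have hAxnorm : ‖(EuclideanSpace.equiv (Equiv.Perm (Fin n)) ℝ).symm (A.mulVec x)‖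
      = c * Real.sqrt N := by
    rw [EuclideanSpace.norm_eq]
    have hcoord : ∀ σ : Equiv.Perm (Fin n),
        ‖((EuclideanSpace.equiv (Equiv.Perm (Fin n)) ℝ).symm (A.mulVec x)) σ‖ ^ 2
        = c ^ 2 * (if Equiv.Perm.sign σ = 1 then (1:ℝ) else 0) := by
      intro σ
      have : ((EuclideanSpace.equiv (Equiv.Perm (Fin n)) ℝ).symm (A.mulVec x)) σ
          = (A.mulVec x) σ := rfl
      rw [this, hrow σ]
      by_cases h : Equiv.Perm.sign σ = 1 <;> simp [h, sq_abs]
    simp_rw [hcoord]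
    rw [← Finset.mul_sum, Finset.sum_boole, hcard,
      Real.sqrt_mul (sq_nonneg c), Real.sqrt_sq hc0]
  have hle := Matrix.l2_opNorm_mulVec A x
  rw [hAxnorm, hxnorm] at hle
  have hsqrt : 0 < Real.sqrt N := Real.sqrt_pos.mpr (by exact_mod_cast hNpos)
  exact le_of_mul_le_mul_right hle hsqrt
end

section
/- Let n = 2^d for an integer d ≥ 1 with n ≥ 2, let k ∈ {0, …, d−1} and j ∈ {0, …, n−1}. Let B be the matrix with rows and columns indexed by the permutations of {0, …, n−1}, defined by B(σ, τ) = 1 if σ is even, τ is odd, σ = τ ∘ (s t) for some transposition (s t), and the k-th binary digit of σ(j) differs from the k-th binary digit of τ(j); and B(σ, τ) = 0 otherwise. Then the spectral norm of B satisfies ‖B‖ ≤ n/2. -/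
open scoped Matrix.Norms.L2Operator
open Classical

/-- Schur test with equal row/column bounds, for the `ℓ²` operator norm. -/
private lemma schur_test {m : Type*} [Fintype m] [DecidableEq m]
    (A : Matrix m m ℝ) {r : ℝ} (hr0 : 0 ≤ r)
    (h0 : ∀ i j, 0 ≤ A i j)
    (hrow : ∀ i, ∑ j, A i j ≤ r)
    (hcol : ∀ j, ∑ i, A i j ≤ r) :
    ‖A‖ ≤ r := by
  rw [Matrix.l2_opNorm_def]
  refine ContinuousLinearMap.opNorm_le_bound _ hr0 fun x => ?_
  have key : ∑ i, (∑ jj, A i jj * x jj) ^ 2 ≤ r ^ 2 * ∑ jj, (x jj) ^ 2 := by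
    have step1 : ∀ i, (∑ jj, A i jj * x jj) ^ 2 ≤ r * ∑ jj, A i jj * (x jj) ^ 2 := by
      intro i
      have e1 : ∀ jj, Real.sqrt (A i jj) * (Real.sqrt (A i jj) * x jj) = A i jj * x jj := by
        intro jj; rw [← mul_assoc, Real.mul_self_sqrt (h0 i jj)]
      have e2 : ∀ jj, (Real.sqrt (A i jj)) ^ 2 = A i jj := fun jj => Real.sq_sqrt (h0 i jj)
      have e3 : ∀ jj, (Real.sqrt (A i jj) * x jj) ^ 2 = A i jj * (x jj) ^ 2 := by
        intro jj; rw [mul_pow, Real.sq_sqrt (h0 i jj)]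
      calc (∑ jj, A i jj * x jj) ^ 2
          = (∑ jj, Real.sqrt (A i jj) * (Real.sqrt (A i jj) * x jj)) ^ 2 := by
            simp_rw [e1]
        _ ≤ (∑ jj, (Real.sqrt (A i jj)) ^ 2) * ∑ jj, (Real.sqrt (A i jj) * x jj) ^ 2 :=
            Finset.sum_mul_sq_le_sq_mul_sq _ _ _
        _ = (∑ jj, A i jj) * ∑ jj, A i jj * (x jj) ^ 2 := by simp_rw [e2, e3]
        _ ≤ r * ∑ jj, A i jj * (x jj) ^ 2 :=
            mul_le_mul_of_nonneg_right (hrow i)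
              (Finset.sum_nonneg fun jj _ => mul_nonneg (h0 i jj) (sq_nonneg _))
    calc ∑ i, (∑ jj, A i jj * x jj) ^ 2
        ≤ ∑ i, r * ∑ jj, A i jj * (x jj) ^ 2 := Finset.sum_le_sum fun i _ => step1 i
      _ = r * ∑ jj, (∑ i, A i jj) * (x jj) ^ 2 := by
          rw [← Finset.mul_sum, Finset.sum_comm]
          congr 1
          exact Finset.sum_congr rfl fun jj _ => (Finset.sum_mul _ _ _).symm
      _ ≤ r * ∑ jj, r * (x jj) ^ 2 := by
          refine mul_le_mul_of_nonneg_left ?_ hr0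
          exact Finset.sum_le_sum fun jj _ =>
            mul_le_mul_of_nonneg_right (hcol jj) (sq_nonneg _)
      _ = r ^ 2 * ∑ jj, (x jj) ^ 2 := by rw [← Finset.mul_sum, ← mul_assoc, sq]
  have hy : ‖(Matrix.toEuclideanLin ≪≫ₗ LinearMap.toContinuousLinearMap) A x‖
      = Real.sqrt (∑ i, (∑ jj, A i jj * x jj) ^ 2) := by
    rw [EuclideanSpace.norm_eq]
    congr 1
    refine Finset.sum_congr rfl fun i _ => ?_
    rw [Real.norm_eq_abs, sq_abs]
    rfl
  have hx : ‖x‖ = Real.sqrt (∑ jj, (x jj) ^ 2) := by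
    rw [EuclideanSpace.norm_eq]
    congr 1
    refine Finset.sum_congr rfl fun jj _ => ?_
    rw [Real.norm_eq_abs, sq_abs]
  rw [hy, hx, show r * Real.sqrt (∑ jj, (x jj) ^ 2)
      = Real.sqrt (r ^ 2 * ∑ jj, (x jj) ^ 2) by
    rw [Real.sqrt_mul (sq_nonneg r), Real.sqrt_sq hr0]]
  exact Real.sqrt_le_sqrt key

/-- Exactly half of the numbers `0, …, 2^d - 1` have `k`-th bit equal to `b`, for `k < d`. -/
private lemma card_bit_eq {d n : ℕ} (hn : n = 2 ^ d) (k : ℕ) (hk : k < d) (b : Bool) :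
    (Finset.univ.filter fun v : Fin n => Nat.testBit (v : ℕ) k = b).card = n / 2 := by
  subst hn
  have h2k : 2 ^ k < 2 ^ d := Nat.pow_lt_pow_right one_lt_two hk
  have hbit : ∀ v : Fin (2 ^ d),
      Nat.testBit ((v : ℕ) ^^^ 2 ^ k) k = !Nat.testBit (v : ℕ) k := by
    intro v
    rw [Nat.testBit_xor, Nat.testBit_two_pow_self]
    cases Nat.testBit (v : ℕ) k <;> rfl
  have key : ∀ c : Bool,
      (Finset.univ.filter fun v : Fin (2 ^ d) => Nat.testBit (v : ℕ) k = c).card =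
      (Finset.univ.filter fun v : Fin (2 ^ d) => Nat.testBit (v : ℕ) k = !c).card := by
    intro c
    refine Finset.card_bij'
      (fun v _ => (⟨(v : ℕ) ^^^ 2 ^ k, Nat.xor_lt_two_pow v.isLt h2k⟩ : Fin (2 ^ d)))
      (fun v _ => (⟨(v : ℕ) ^^^ 2 ^ k, Nat.xor_lt_two_pow v.isLt h2k⟩ : Fin (2 ^ d)))
      ?_ ?_ ?_ ?_
    · intro a ha
      simp only [Finset.mem_filter, Finset.mem_univ, true_and] at ha ⊢
      rw [hbit a, ha]
    · intro a ha
      simp only [Finset.mem_filter, Finset.mem_univ, true_and] at ha ⊢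
      rw [hbit a, ha, Bool.not_not]
    · intro a _
      apply Fin.ext
      simp [Nat.xor_assoc]
    · intro a _
      apply Fin.ext
      simp [Nat.xor_assoc]
  have hsum := Finset.card_filter_add_card_filter_not
    (s := (Finset.univ : Finset (Fin (2 ^ d))))
    (p := fun v => Nat.testBit (v : ℕ) k = b)
  have hneg : (Finset.univ.filter fun v : Fin (2 ^ d) => ¬ Nat.testBit (v : ℕ) k = b) =
      (Finset.univ.filter fun v : Fin (2 ^ d) => Nat.testBit (v : ℕ) k = !b) := by
    ext v
    simp only [Finset.mem_filter, Finset.mem_univ, true_and]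
    cases hv : Nat.testBit (v : ℕ) k <;> cases b <;> simp
  rw [hneg, ← key b] at hsum
  rw [Finset.card_univ, Fintype.card_fin] at hsum
  omega

/-- Half of the numbers `0, …, 2^d - 1` have `k`-th bit different from `b`. -/
private lemma card_bit_ne {d n : ℕ} (hn : n = 2 ^ d) (k : ℕ) (hk : k < d) (b : Bool) :
    (Finset.univ.filter fun v : Fin n => Nat.testBit (v : ℕ) k ≠ b).card = n / 2 := by
  have h : (Finset.univ.filter fun v : Fin n => Nat.testBit (v : ℕ) k ≠ b) =
      (Finset.univ.filter fun v : Fin n => Nat.testBit (v : ℕ) k = !b) := by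
    ext v
    simp only [Finset.mem_filter, Finset.mem_univ, true_and]
    cases hv : Nat.testBit (v : ℕ) k <;> cases b <;> simp
  rw [h, card_bit_eq hn k hk]

/-- If `σ = τ * (s t)` for some transposition and `σ j ≠ τ j`, then the transposition moves
`j`, hence `σ` is determined by `τ` and `σ j`. -/
private lemma perm_determined {n : ℕ} (j : Fin n) (σ τ : Equiv.Perm (Fin n))
    (h : ∃ s t : Fin n, s ≠ t ∧ σ = τ * Equiv.swap s t) (hne : σ j ≠ τ j) :
    σ = τ * Equiv.swap j (τ⁻¹ (σ j)) := by
  obtain ⟨s, t, hst, rfl⟩ := h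
  have hjj : Equiv.swap s t j ≠ j := by
    intro h'
    exact hne (by rw [Equiv.Perm.mul_apply, h'])
  have hj : j = s ∨ j = t := by
    by_contra hc
    push_neg at hc
    exact hjj (Equiv.swap_apply_of_ne_of_ne hc.1 hc.2)
  rcases hj with rfl | rfl
  · have ht : τ⁻¹ ((τ * Equiv.swap j t) j) = t := by
      simp [Equiv.Perm.mul_apply, Equiv.swap_apply_left]
    rw [ht]
  · have hs : τ⁻¹ ((τ * Equiv.swap s j) j) = s := by
      simp [Equiv.Perm.mul_apply, Equiv.swap_apply_right]
    rw [hs, Equiv.swap_comm]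

/-- **Spectral norm upper bound for the bit-restricted `SG_n` adversary matrix.** Let
`n = 2^d ≥ 2` (`d ≥ 1`), `k ∈ {0, …, d-1}`, `j ∈ {0, …, n-1}`, and let `B` be the matrix
indexed by permutations of `{0, …, n-1}` with `B σ τ = 1` iff `σ` is even, `τ` is odd,
`σ = τ * (s t)` for some transposition `(s t)`, and the `k`-th binary digit of `σ j` differs
from the `k`-th binary digit of `τ j` (and `B σ τ = 0` otherwise). Then `‖B‖ ≤ n/2`. -/
theorem sg_adversary_matrix_hadamard_norm_le
    {d : ℕ} (hd : 1 ≤ d) (n : ℕ) (hn : n = 2 ^ d) (hn2 : 2 ≤ n)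
    (k : ℕ) (hk : k < d) (j : Fin n)
    (B : Matrix (Equiv.Perm (Fin n)) (Equiv.Perm (Fin n)) ℝ)
    (hB : ∀ σ τ, B σ τ =
      if Equiv.Perm.sign σ = 1 ∧ Equiv.Perm.sign τ = -1 ∧
          (∃ s t : Fin n, s ≠ t ∧ σ = τ * Equiv.swap s t) ∧
          Nat.testBit ((σ j : Fin n) : ℕ) k ≠ Nat.testBit ((τ j : Fin n) : ℕ) k
        then 1 else 0) :
    ‖B‖ ≤ (n : ℝ) / 2 := by
  have h2n : 2 ∣ n := hn ▸ dvd_pow_self 2 (Nat.one_le_iff_ne_zero.mp hd)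
  have hhalf : ((n / 2 : ℕ) : ℝ) = (n : ℝ) / 2 := by
    rw [Nat.cast_div h2n (by norm_num)]
    norm_num
  set P : Equiv.Perm (Fin n) → Equiv.Perm (Fin n) → Prop := fun σ τ =>
    Equiv.Perm.sign σ = 1 ∧ Equiv.Perm.sign τ = -1 ∧
      (∃ s t : Fin n, s ≠ t ∧ σ = τ * Equiv.swap s t) ∧
      Nat.testBit ((σ j : Fin n) : ℕ) k ≠ Nat.testBit ((τ j : Fin n) : ℕ) k with hP
  -- in any row or column of `B` the sum of the (0/1) entries is at most `n/2`
  have hneapp : ∀ σ τ : Equiv.Perm (Fin n), P σ τ → σ j ≠ τ j := by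
    intro σ τ hστ h'
    exact hστ.2.2.2 (by rw [h'])
  have hrow : ∀ σ, ∑ τ, B σ τ ≤ (n : ℝ) / 2 := by
    intro σ
    have hsum : ∑ τ, B σ τ = ((Finset.univ.filter fun τ => P σ τ).card : ℝ) := by
      simp_rw [hB]
      exact Finset.sum_boole _ _
    rw [hsum, ← hhalf, Nat.cast_le]
    rw [← card_bit_ne (n := n) hn k hk (Nat.testBit ((σ j : Fin n) : ℕ) k)]
    refine Finset.card_le_card_of_injOn (fun τ => τ j) ?_ ?_
    · intro τ hτ
      change τ ∈ Finset.univ.filter (fun τ => P σ τ) at hτ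
      simp only [Finset.mem_coe, Finset.mem_filter, Finset.mem_univ, true_and] at hτ ⊢
      exact fun h' => hτ.2.2.2 h'.symm
    · intro τ₁ h₁ τ₂ h₂ hjj
      simp only [Finset.coe_filter, Set.mem_setOf_eq, Finset.mem_univ, true_and] at h₁ h₂
      have e₁ : τ₁ = σ * Equiv.swap j (σ⁻¹ (τ₁ j)) := by
        refine perm_determined j τ₁ σ ?_ (fun h' => hneapp σ τ₁ h₁ h'.symm)
        obtain ⟨s, t, hst, hστ⟩ := h₁.2.2.1
        exact ⟨s, t, hst, by rw [hστ, mul_assoc, Equiv.swap_mul_self, mul_one]⟩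
      have e₂ : τ₂ = σ * Equiv.swap j (σ⁻¹ (τ₂ j)) := by
        refine perm_determined j τ₂ σ ?_ (fun h' => hneapp σ τ₂ h₂ h'.symm)
        obtain ⟨s, t, hst, hστ⟩ := h₂.2.2.1
        exact ⟨s, t, hst, by rw [hστ, mul_assoc, Equiv.swap_mul_self, mul_one]⟩
      have hjj' : τ₁ j = τ₂ j := hjj
      rw [e₁, e₂, hjj']
  have hcol : ∀ τ, ∑ σ, B σ τ ≤ (n : ℝ) / 2 := by
    intro τ
    have hsum : ∑ σ, B σ τ = ((Finset.univ.filter fun σ => P σ τ).card : ℝ) := by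
      simp_rw [hB]
      exact Finset.sum_boole _ _
    rw [hsum, ← hhalf, Nat.cast_le]
    rw [← card_bit_ne (n := n) hn k hk (Nat.testBit ((τ j : Fin n) : ℕ) k)]
    refine Finset.card_le_card_of_injOn (fun σ => σ j) ?_ ?_
    · intro σ hσ
      change σ ∈ Finset.univ.filter (fun σ => P σ τ) at hσ
      simp only [Finset.mem_coe, Finset.mem_filter, Finset.mem_univ, true_and] at hσ ⊢
      exact hσ.2.2.2
    · intro σ₁ h₁ σ₂ h₂ hjj
      simp only [Finset.coe_filter, Set.mem_setOf_eq, Finset.mem_univ, true_and] at h₁ h₂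
      have e₁ : σ₁ = τ * Equiv.swap j (τ⁻¹ (σ₁ j)) :=
        perm_determined j σ₁ τ h₁.2.2.1 (hneapp σ₁ τ h₁)
      have e₂ : σ₂ = τ * Equiv.swap j (τ⁻¹ (σ₂ j)) :=
        perm_determined j σ₂ τ h₂.2.2.1 (hneapp σ₂ τ h₂)
      have hjj' : σ₁ j = σ₂ j := hjj
      rw [e₁, e₂, hjj']
  have h0 : ∀ σ τ, 0 ≤ B σ τ := by
    intro σ τ
    rw [hB]
    split_ifs <;> norm_num
  exact schur_test B (by positivity) h0 hrow hcol
end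

section
/- Let n = 2^d ≥ 4 for an integer d. Encode each permutation σ of {0, …, n−1} as the binary string of length n·d obtained by concatenating the d-bit binary representations of σ(0), …, σ(n−1), and let SG_n map such a string to 0 if σ is even and to 1 if σ is odd. Then there exists a nonzero matrix A with nonnegative real entries, rows and columns indexed by these encoded permutations, such that A(σ, τ) = 0 whenever SG_n(σ) = SG_n(τ), and ‖A‖ ≥ (n−1) · max_{i} ‖A ∘ D_i‖, where the maximum is over all bit positions i ∈ {1, …, n·d} and D_i(σ, τ) = 1 iff the encodings of σ and τ differ in bit position i. -/
open scoped Matrix.Norms.L2Operator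
open Classical

lemma schur_bound' {m : Type*} [Fintype m] (M : Matrix m m ℝ) (r : ℝ) (hr : 0 ≤ r)
    (h0 : ∀ i j, 0 ≤ M i j)
    (hrow : ∀ i, ∑ j, M i j ≤ r) (hcol : ∀ j, ∑ i, M i j ≤ r) : ‖M‖ ≤ r := by
  rw [Matrix.l2_opNorm_def]
  apply ContinuousLinearMap.opNorm_le_bound _ hr
  intro x
  rw [LinearEquiv.trans_apply, LinearMap.coe_toContinuousLinearMap']
  have hnx : ‖x‖ = Real.sqrt (∑ j, (x j) ^ 2) := by
    rw [EuclideanSpace.norm_eq]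
    congr 1
    apply Finset.sum_congr rfl
    intro j _
    rw [Real.norm_eq_abs, sq_abs]
  have hy : ‖Matrix.toEuclideanLin M x‖ = Real.sqrt (∑ i, (∑ j, M i j * x j) ^ 2) := by
    rw [EuclideanSpace.norm_eq]
    congr 1
    apply Finset.sum_congr rfl
    intro i _
    rw [Real.norm_eq_abs, sq_abs]
    rfl
  rw [hy, hnx]
  have key : ∑ i, (∑ j, M i j * x j) ^ 2 ≤ r ^ 2 * ∑ j, (x j) ^ 2 := by
    have step1 : ∀ i, (∑ j, M i j * x j) ^ 2 ≤ r * ∑ j, M i j * (x j) ^ 2 := by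
      intro i
      have cs := Finset.sum_sq_le_sum_mul_sum_of_sq_eq_mul Finset.univ
        (r := fun j => M i j * x j) (f := fun j => M i j) (g := fun j => M i j * (x j) ^ 2)
        (fun j _ => h0 i j) (fun j _ => mul_nonneg (h0 i j) (sq_nonneg _))
        (fun j _ => by ring)
      calc (∑ j, M i j * x j) ^ 2 ≤ (∑ j, M i j) * ∑ j, M i j * (x j) ^ 2 := cs
        _ ≤ r * ∑ j, M i j * (x j) ^ 2 := by
            apply mul_le_mul_of_nonneg_right (hrow i)
            exact Finset.sum_nonneg fun j _ => mul_nonneg (h0 i j) (sq_nonneg _)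
    calc ∑ i, (∑ j, M i j * x j) ^ 2 ≤ ∑ i, r * ∑ j, M i j * (x j) ^ 2 :=
          Finset.sum_le_sum fun i _ => step1 i
      _ = r * ∑ j, (∑ i, M i j) * (x j) ^ 2 := by
          rw [← Finset.mul_sum, Finset.sum_comm]
          congr 1
          apply Finset.sum_congr rfl
          intro j _
          rw [Finset.sum_mul]
      _ ≤ r * ∑ j, r * (x j) ^ 2 := by
          apply mul_le_mul_of_nonneg_left _ hr
          apply Finset.sum_le_sum
          intro j _
          exact mul_le_mul_of_nonneg_right (hcol j) (sq_nonneg _)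
      _ = r ^ 2 * ∑ j, (x j) ^ 2 := by rw [← Finset.mul_sum]; ring
  calc Real.sqrt (∑ i, (∑ j, M i j * x j) ^ 2) ≤ Real.sqrt (r ^ 2 * ∑ j, (x j) ^ 2) :=
        Real.sqrt_le_sqrt key
    _ = r * Real.sqrt (∑ j, (x j) ^ 2) := by
        rw [Real.sqrt_mul (sq_nonneg r), Real.sqrt_sq hr]


lemma l2_opNorm_ge_const_row_sum {m : Type*} [Fintype m] [Nonempty m]
    (M : Matrix m m ℝ) (s : ℝ) (hs : 0 ≤ s) (h : ∀ i, ∑ j, M i j = s) : s ≤ ‖M‖ := by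
  set x : EuclideanSpace ℝ m := (WithLp.equiv 2 (m → ℝ)).symm (fun _ => 1) with hx
  have hmv := Matrix.l2_opNorm_mulVec M x
  have hMx : M.mulVec x = fun _ => s := by
    funext i
    simp [Matrix.mulVec, dotProduct, hx, h i]
  have hnx : ‖x‖ = Real.sqrt (Fintype.card m) := by
    rw [EuclideanSpace.norm_eq]
    simp [hx]
  have hnMx : ‖(EuclideanSpace.equiv m ℝ).symm (M.mulVec x)‖ = s * Real.sqrt (Fintype.card m) := by
    rw [EuclideanSpace.norm_eq]
    have h1 : ∀ i : m, ‖((EuclideanSpace.equiv m ℝ).symm (M.mulVec x)) i‖ ^ 2 = s ^ 2 := by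
      intro i
      have : ((EuclideanSpace.equiv m ℝ).symm (M.mulVec x)) i = s := by
        rw [hMx]; rfl
      rw [this, Real.norm_eq_abs, sq_abs]
    rw [Finset.sum_congr rfl fun i _ => h1 i]
    rw [Finset.sum_const, Finset.card_univ, nsmul_eq_mul, Real.sqrt_mul' _ (sq_nonneg s),
      Real.sqrt_sq hs, mul_comm]
  rw [hnMx, hnx] at hmv
  have hpos : 0 < Real.sqrt (Fintype.card m) := by
    apply Real.sqrt_pos.2
    exact_mod_cast Fintype.card_pos
  calc s = s * Real.sqrt (Fintype.card m) / Real.sqrt (Fintype.card m) := by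
        field_simp
    _ ≤ ‖M‖ * Real.sqrt (Fintype.card m) / Real.sqrt (Fintype.card m) := by
        apply div_le_div_of_nonneg_right hmv hpos.le
    _ = ‖M‖ := by field_simp


/-- A swap moving `j` is the swap of `j` and its image. -/
lemma isSwap_eq_swap_of_ne {α : Type*} [DecidableEq α] {π : Equiv.Perm α}
    (h : π.IsSwap) {j : α} (hj : π j ≠ j) : π = Equiv.swap j (π j) := by
  obtain ⟨a, b, hab, rfl⟩ := h
  rcases (Equiv.swap_apply_ne_self_iff.1 hj).2 with rfl | rfl
  · rw [Equiv.swap_apply_left]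
  · rw [Equiv.swap_apply_right, Equiv.swap_comm]

/-- Number of swaps is at least `(n² - n)/2`. -/
lemma card_swaps_ge (n : ℕ) :
    n * n - n ≤ 2 * (Finset.univ.filter fun π : Equiv.Perm (Fin n) => π.IsSwap).card := by
  have h1 : (Finset.univ : Finset (Fin n)).offDiag.card = n * n - n := by
    rw [Finset.offDiag_card, Finset.card_univ, Fintype.card_fin]
  have h2 := Finset.card_le_mul_card_image (f := fun p : Fin n × Fin n => Equiv.swap p.1 p.2)
    (Finset.univ : Finset (Fin n)).offDiag 2 ?_
  · refine le_trans (h1 ▸ h2) (Nat.mul_le_mul_left 2 ?_)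
    apply Finset.card_le_card
    intro π hπ
    simp only [Finset.mem_image] at hπ
    obtain ⟨p, hp, rfl⟩ := hπ
    rw [Finset.mem_offDiag] at hp
    exact Finset.mem_filter.2 ⟨Finset.mem_univ _, ⟨p.1, p.2, hp.2.2, rfl⟩⟩
  · intro b hb
    simp only [Finset.mem_image] at hb
    obtain ⟨p, hp, rfl⟩ := hb
    rw [Finset.mem_offDiag] at hp
    have hsub : ((Finset.univ : Finset (Fin n)).offDiag.filter
        fun q => Equiv.swap q.1 q.2 = Equiv.swap p.1 p.2) ⊆ {(p.1, p.2), (p.2, p.1)} := by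
      intro q hq
      rw [Finset.mem_filter, Finset.mem_offDiag] at hq
      obtain ⟨⟨-, -, hq12⟩, heq⟩ := hq
      have hmove : Equiv.swap p.1 p.2 q.1 ≠ q.1 := by
        rw [← heq, Equiv.swap_apply_left]; exact (Ne.symm hq12)
      have hq2 : q.2 = Equiv.swap p.1 p.2 q.1 := by rw [← heq, Equiv.swap_apply_left]
      rcases (Equiv.swap_apply_ne_self_iff.1 hmove).2 with h1 | h1
      · have : q.2 = p.2 := by rw [hq2, h1, Equiv.swap_apply_left]
        simp [Finset.mem_insert, Prod.ext_iff, h1, this]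
      · have : q.2 = p.1 := by rw [hq2, h1, Equiv.swap_apply_right]
        simp [Finset.mem_insert, Prod.ext_iff, h1, this]
    calc _ ≤ ({(p.1, p.2), (p.2, p.1)} : Finset (Fin n × Fin n)).card :=
          Finset.card_le_card hsub
      _ ≤ 2 := Finset.card_insert_le _ _ |>.trans (by simp)

/-- Each bit class has exactly `n/2` elements: `2 * card = n`. -/
lemma card_bit_class {d : ℕ} (n : ℕ) (hn : n = 2 ^ d) (k : Fin d) (b : Bool) :
    2 * (Finset.univ.filter fun v : Fin n => Nat.testBit (v : ℕ) (k : ℕ) = b).card = n := by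
  subst hn
  have hlt : (2 : ℕ) ^ (k : ℕ) < 2 ^ d := Nat.pow_lt_pow_right one_lt_two k.2
  have hxlt : ∀ v : Fin (2 ^ d), (v : ℕ) ^^^ 2 ^ (k : ℕ) < 2 ^ d := fun v =>
    Nat.xor_lt_two_pow v.2 hlt
  set e : Fin (2 ^ d) → Fin (2 ^ d) := fun v => ⟨(v : ℕ) ^^^ 2 ^ (k : ℕ), hxlt v⟩ with he
  have hbit : ∀ v : Fin (2 ^ d), Nat.testBit ((e v : Fin (2 ^ d)) : ℕ) (k : ℕ)
      = !(Nat.testBit (v : ℕ) (k : ℕ)) := by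
    intro v
    show Nat.testBit ((v : ℕ) ^^^ 2 ^ (k : ℕ)) (k : ℕ) = _
    rw [Nat.testBit_xor, Nat.testBit_two_pow_self, Bool.xor_true]
  have hinv : ∀ v : Fin (2 ^ d), e (e v) = v := by
    intro v
    apply Fin.ext
    show ((v : ℕ) ^^^ 2 ^ (k : ℕ)) ^^^ 2 ^ (k : ℕ) = (v : ℕ)
    rw [Nat.xor_assoc, Nat.xor_self, Nat.xor_zero]
  have hcard : ∀ c : Bool,
      (Finset.univ.filter fun v : Fin (2 ^ d) => Nat.testBit (v : ℕ) (k : ℕ) = c).card =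
      (Finset.univ.filter fun v : Fin (2 ^ d) => Nat.testBit (v : ℕ) (k : ℕ) = !c).card := by
    intro c
    apply Finset.card_nbij' e e
    · intro v hv
      rw [Finset.mem_coe, Finset.mem_filter] at hv ⊢
      exact ⟨Finset.mem_univ _, by rw [hbit v, hv.2]⟩
    · intro v hv
      rw [Finset.mem_coe, Finset.mem_filter] at hv ⊢
      exact ⟨Finset.mem_univ _, by rw [hbit v, hv.2, Bool.not_not]⟩
    · intro v _; exact hinv v
    · intro v _; exact hinv v
  have hsplit := Finset.card_filter_add_card_filter_not
    (s := (Finset.univ : Finset (Fin (2 ^ d))))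
    (p := fun v : Fin (2 ^ d) => Nat.testBit (v : ℕ) (k : ℕ) = b)
  have hneg : (Finset.univ.filter fun v : Fin (2 ^ d) => ¬ Nat.testBit (v : ℕ) (k : ℕ) = b)
      = Finset.univ.filter fun v : Fin (2 ^ d) => Nat.testBit (v : ℕ) (k : ℕ) = !b := by
    apply Finset.filter_congr
    intro v _
    cases hb : Nat.testBit (v : ℕ) (k : ℕ) <;> cases b <;> simp
  rw [hneg, ← hcard b] at hsplit
  rw [two_mul, hsplit, Finset.card_univ, Fintype.card_fin]

lemma isSwap_inv {α : Type*} [DecidableEq α] {π : Equiv.Perm α} (h : π.IsSwap) :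
    π⁻¹.IsSwap := by
  obtain ⟨a, b, hab, rfl⟩ := h
  exact ⟨a, b, hab, by rw [Equiv.swap_inv]⟩

/-- **Adversary witness for `SG_n`** (`ADV(SG_n) = Ω(n)`). Let `n = 2^d ≥ 4`. Permutations `σ`
of `{0, …, n-1}` are encoded as binary strings of length `n·d`, the bit at position `(j, k)`
being the `k`-th binary digit of `σ j`; `SG_n` maps such a string to `0` if `σ` is even and `1`
if `σ` is odd. Then there exists a nonzero matrix `A` with nonnegative real entries, indexed by
permutations, such that `A σ τ = 0` whenever `σ` and `τ` have the same sign, and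
`‖A‖ ≥ (n-1) · ‖A ∘ D_{(j,k)}‖` for every bit position `(j, k)`, where
`D_{(j,k)} σ τ = 1` iff the encodings of `σ` and `τ` differ at position `(j, k)`. -/
theorem adversary_witness_sg
    {d : ℕ} (n : ℕ) (hn : n = 2 ^ d) (hn4 : 4 ≤ n) :
    ∃ A : Matrix (Equiv.Perm (Fin n)) (Equiv.Perm (Fin n)) ℝ,
      A ≠ 0 ∧ (∀ σ τ, 0 ≤ A σ τ) ∧
      (∀ σ τ, Equiv.Perm.sign σ = Equiv.Perm.sign τ → A σ τ = 0) ∧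
      ∀ (j : Fin n) (k : Fin d),
        ((n : ℝ) - 1) *
            ‖Matrix.hadamard A (Matrix.of fun σ τ : Equiv.Perm (Fin n) =>
              if Nat.testBit ((σ j : Fin n) : ℕ) (k : ℕ) ≠
                  Nat.testBit ((τ j : Fin n) : ℕ) (k : ℕ)
                then (1 : ℝ) else 0)‖
          ≤ ‖A‖ := by

  have hn0 : 0 < n := by omega
  set A : Matrix (Equiv.Perm (Fin n)) (Equiv.Perm (Fin n)) ℝ :=
    Matrix.of fun σ τ => if (σ⁻¹ * τ).IsSwap then (1 : ℝ) else 0 with hA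
  have hAapp : ∀ σ τ, A σ τ = if (σ⁻¹ * τ).IsSwap then (1 : ℝ) else 0 := fun _ _ => rfl
  have h01 : (⟨0, by omega⟩ : Fin n) ≠ ⟨1, by omega⟩ := by
    intro h
    exact absurd (congrArg Fin.val h) (by simp)
  refine ⟨A, ?_, ?_, ?_, ?_⟩
  · -- A ≠ 0
    intro h
    have := congrFun (congrFun h (1 : Equiv.Perm (Fin n))) (Equiv.swap ⟨0, by omega⟩ ⟨1, by omega⟩)
    rw [hAapp] at this
    rw [if_pos] at this
    · exact one_ne_zero ((show ((1:ℝ) = 0) from this))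
    · exact ⟨⟨0, by omega⟩, ⟨1, by omega⟩, h01, by group⟩
  · intro σ τ
    rw [hAapp]
    split <;> norm_num
  · intro σ τ hsign
    rw [hAapp, if_neg]
    intro hsw
    have h1 : Equiv.Perm.sign (σ⁻¹ * τ) = -1 := hsw.sign_eq
    rw [map_mul, map_inv, hsign, inv_mul_cancel] at h1
    exact absurd h1.symm (by decide)
  · intro j k
    set M := Matrix.hadamard A (Matrix.of fun σ τ : Equiv.Perm (Fin n) =>
      if Nat.testBit ((σ j : Fin n) : ℕ) (k : ℕ) ≠ Nat.testBit ((τ j : Fin n) : ℕ) (k : ℕ)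
        then (1 : ℝ) else 0) with hM
    have hMapp : ∀ σ τ, M σ τ =
        if ((σ⁻¹ * τ).IsSwap ∧ Nat.testBit ((τ j : Fin n) : ℕ) (k : ℕ) ≠
            Nat.testBit ((σ j : Fin n) : ℕ) (k : ℕ)) then (1 : ℝ) else 0 := by
      intro σ τ
      show A σ τ * _ = _
      rw [hAapp]
      have hnec : (Nat.testBit ((σ j : Fin n) : ℕ) (k : ℕ) ≠
          Nat.testBit ((τ j : Fin n) : ℕ) (k : ℕ)) ↔
          (Nat.testBit ((τ j : Fin n) : ℕ) (k : ℕ) ≠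
          Nat.testBit ((σ j : Fin n) : ℕ) (k : ℕ)) := ne_comm
      by_cases h1 : (σ⁻¹ * τ).IsSwap <;>
        by_cases h2 : Nat.testBit ((τ j : Fin n) : ℕ) (k : ℕ) ≠
          Nat.testBit ((σ j : Fin n) : ℕ) (k : ℕ)
      · rw [Matrix.of_apply, if_pos h1, if_pos (hnec.2 h2), if_pos ⟨h1, h2⟩, one_mul]
      · rw [Matrix.of_apply, if_pos h1, if_neg (fun hc => h2 (hnec.1 hc)),
          if_neg (fun hc : _ ∧ _ => h2 hc.2), mul_zero]
      · rw [Matrix.of_apply, if_neg h1, zero_mul,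
          if_neg (fun hc : _ ∧ _ => h1 hc.1)]
      · rw [Matrix.of_apply, if_neg h1, zero_mul,
          if_neg (fun hc : _ ∧ _ => h1 hc.1)]
    -- row sums of A
    set S := (Finset.univ.filter fun π : Equiv.Perm (Fin n) => π.IsSwap).card with hS
    have rowA : ∀ σ : Equiv.Perm (Fin n), ∑ τ, A σ τ = (S : ℝ) := by
      intro σ
      have hre := Equiv.sum_comp (Equiv.mulLeft σ)
        (fun τ : Equiv.Perm (Fin n) => if (σ⁻¹ * τ).IsSwap then (1 : ℝ) else 0)
      simp only [Equiv.coe_mulLeft] at hre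
      calc ∑ τ, A σ τ = ∑ τ : Equiv.Perm (Fin n),
            (if (σ⁻¹ * τ).IsSwap then (1 : ℝ) else 0) := by
            exact Finset.sum_congr rfl fun τ _ => hAapp σ τ
        _ = ∑ π : Equiv.Perm (Fin n), (if (σ⁻¹ * (σ * π)).IsSwap then (1 : ℝ) else 0) := hre.symm
        _ = ∑ π : Equiv.Perm (Fin n), (if π.IsSwap then (1 : ℝ) else 0) := by
            apply Finset.sum_congr rfl
            intro π _
            rw [inv_mul_cancel_left]
        _ = (S : ℝ) := by rw [hS]; exact Finset.sum_boole _ _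
    have hAnorm : (S : ℝ) ≤ ‖A‖ :=
      l2_opNorm_ge_const_row_sum A S (by positivity) rowA
    -- row sums of M
    have rowM : ∀ σ : Equiv.Perm (Fin n), ∑ τ, M σ τ ≤ (n : ℝ) / 2 := by
      intro σ
      set R := (Finset.univ.filter fun τ : Equiv.Perm (Fin n) =>
        (σ⁻¹ * τ).IsSwap ∧ Nat.testBit ((τ j : Fin n) : ℕ) (k : ℕ) ≠
          Nat.testBit ((σ j : Fin n) : ℕ) (k : ℕ)) with hR
      set B := (Finset.univ.filter fun v : Fin n =>
        Nat.testBit (v : ℕ) (k : ℕ) = !(Nat.testBit ((σ j : Fin n) : ℕ) (k : ℕ))) with hB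
      have hsum : ∑ τ, M σ τ = (R.card : ℝ) := by
        rw [Finset.sum_congr rfl fun τ _ => hMapp σ τ, hR]
        exact Finset.sum_boole _ _
      have hRB : R.card ≤ B.card := by
        apply Finset.card_le_card_of_injOn (fun τ => τ j)
        · intro τ hτ
          rw [hR, Finset.mem_coe, Finset.mem_filter] at hτ
          rw [hB, Finset.mem_coe, Finset.mem_filter]
          refine ⟨Finset.mem_univ _, ?_⟩
          cases hb : Nat.testBit ((σ j : Fin n) : ℕ) (k : ℕ) <;>
            cases hb' : Nat.testBit ((τ j : Fin n) : ℕ) (k : ℕ) <;>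
            simp_all
        · intro τ hτ τ' hτ' hjj
          simp only [Finset.coe_filter, Set.mem_setOf_eq, hR] at hτ hτ'
          have key : ∀ ρ : Equiv.Perm (Fin n), ((σ⁻¹ * ρ).IsSwap ∧
              Nat.testBit ((ρ j : Fin n) : ℕ) (k : ℕ) ≠
                Nat.testBit ((σ j : Fin n) : ℕ) (k : ℕ)) →
              ρ = σ * Equiv.swap j (σ⁻¹ (ρ j)) := by
            intro ρ ⟨hs, hbit⟩
            have hmove : (σ⁻¹ * ρ) j ≠ j := by
              intro hfix
              apply hbit
              have : ρ j = σ j := by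
                have := congrArg σ hfix
                simpa [Equiv.Perm.mul_apply] using this
              rw [this]
            have heq := isSwap_eq_swap_of_ne hs hmove
            have h3 : σ * (σ⁻¹ * ρ) = σ * Equiv.swap j ((σ⁻¹ * ρ) j) := by rw [← heq]
            rw [mul_inv_cancel_left] at h3
            exact h3
          have e1 := key τ hτ.2
          have e2 := key τ' hτ'.2
          have hjj' : τ j = τ' j := hjj
          rw [hjj'] at e1
          exact e1.trans e2.symm
      have hBcard : 2 * B.card = n := card_bit_class n hn k _
      have hBed : (B.card : ℝ) = (n : ℝ) / 2 := by
        have : ((2 * B.card : ℕ) : ℝ) = (n : ℝ) := by rw [hBcard]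
        push_cast at this
        linarith
      rw [hsum]
      rw [← hBed]
      exact_mod_cast hRB
    -- symmetry of M
    have hMsym : ∀ σ τ, M σ τ = M τ σ := by
      intro σ τ
      rw [hMapp, hMapp]
      congr 1
      · apply propext
        constructor
        · rintro ⟨hs, hb⟩
          refine ⟨?_, hb.symm⟩
          have := isSwap_inv hs
          rwa [mul_inv_rev, inv_inv] at this
        · rintro ⟨hs, hb⟩
          refine ⟨?_, hb.symm⟩
          have := isSwap_inv hs
          rwa [mul_inv_rev, inv_inv] at this
    have colM : ∀ τ : Equiv.Perm (Fin n), ∑ σ, M σ τ ≤ (n : ℝ) / 2 := by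
      intro τ
      calc ∑ σ, M σ τ = ∑ σ, M τ σ := Finset.sum_congr rfl fun σ _ => hMsym σ τ
        _ ≤ (n : ℝ) / 2 := rowM τ
    have hMnonneg : ∀ σ τ, 0 ≤ M σ τ := by
      intro σ τ
      rw [hMapp]
      split <;> norm_num
    have hMnorm : ‖M‖ ≤ (n : ℝ) / 2 :=
      schur_bound' M ((n : ℝ) / 2) (by positivity) hMnonneg rowM colM
    -- arithmetic
    have hswaps := card_swaps_ge n
    have hcast : ((n : ℝ) * n - n) ≤ 2 * (S : ℝ) := by
      have hle : n ≤ n * n := Nat.le_mul_of_pos_left n hn0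
      have : ((n * n - n : ℕ) : ℝ) ≤ ((2 * S : ℕ) : ℝ) := by exact_mod_cast hswaps
      rw [Nat.cast_sub hle] at this
      push_cast at this
      linarith
    calc ((n : ℝ) - 1) * ‖M‖ ≤ ((n : ℝ) - 1) * ((n : ℝ) / 2) := by
          apply mul_le_mul_of_nonneg_left hMnorm
          have : (4 : ℝ) ≤ n := by exact_mod_cast hn4
          linarith
      _ ≤ (S : ℝ) := by nlinarith
      _ ≤ ‖A‖ := hAnorm
end
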